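/- The generalized Laguerre-type hypergeometric polynomials are self-inverse: defining L̃_n(x) = ((β_1)_n ⋯ (β_s)_n / ((α_1)_n ⋯ (α_r)_n)) · {}_{r+1}F_s(−n,(α_r);(β_s);x), one has for every n the umbral identity ∑_{m=0}^{n} c_{n,m} L̃_m(x) = x^n, where c_{n,m} are exactly the coefficients appearing in the expansion of L̃_n in the monomial basis; i.e., if L̃_n(x) = ∑_{m=0}^n c_{n,m} x^m then also x^n = ∑_{m=0}^n c_{n,m} L̃_m(x). -/

import Mathlib

open Finset

/-- Pochhammer symbol `(λ)_j = ∏_{i=0}^{j-1} (λ + i)`. -/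
noncomputable def poch (l : ℂ) (j : ℕ) : ℂ :=
  ∏ i ∈ Finset.range j, (l + i)

/-- The generalized Laguerre-type hypergeometric polynomial
`L̃_n(x) = ([β_s]_n/[α_r]_n) {}_{r+1}F_s(−n,(α_r);(β_s);x)`. -/
noncomputable def genLag (r s : ℕ) (α : Fin r → ℂ) (β : Fin s → ℂ) (n : ℕ) (x : ℂ) : ℂ :=
  ((∏ i, poch (β i) n) / (∏ i, poch (α i) n)) *
    ∑ j ∈ Finset.range (n + 1),
      (poch (-(n : ℂ)) j * ∏ i, poch (α i) j) /
        ((∏ i, poch (β i) j) * (Nat.factorial j : ℂ)) * x ^ j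

/-!
Since `(-n)_j / j! = (-1)^j C(n,j)`, we have `L̃_n(x) = w_n ∑_j (-1)^j C(n,j) x^j / w_j` with
`w_n = [β]_n / [α]_n`. So the coefficient matrix `c_{n,m}` is the binomial-inversion matrix
`((-1)^m C(n,m))` conjugated by `diag(w)`, and that matrix is an involution: apply the linear
functional `X^j ↦ y_j` to `∑_m (-1)^m C(n,m) (1 - X)^m = (1 - (1 - X))^n = X^n`.
-/

open Polynomial

section BinomialInversion

variable {R : Type*} [CommRing R]

noncomputable def umbralEval (y : ℕ → R) : R[X] →ₗ[R] R :=
  lsum fun j => LinearMap.mulRight R (y j)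

lemma umbralEval_C_mul_X_pow (y : ℕ → R) (a : R) (j : ℕ) :
    umbralEval y (C a * X ^ j) = a * y j := by
  simp [umbralEval, C_mul_X_pow_eq_monomial, sum_monomial_index]

lemma umbralEval_X_pow (y : ℕ → R) (j : ℕ) : umbralEval y (X ^ j) = y j := by
  simpa using umbralEval_C_mul_X_pow y 1 j

lemma umbralEval_one_sub_X_pow (y : ℕ → R) (m : ℕ) :
    umbralEval y ((1 - X) ^ m) = ∑ j ∈ range (m + 1), (-1) ^ j * m.choose j * y j := by
  rw [← neg_add_eq_sub, add_pow, map_sum]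
  refine sum_congr rfl fun j _ => ?_
  have hterm : (-X : R[X]) ^ j * 1 ^ (m - j) * (m.choose j : R[X]) =
      C ((-1 : R) ^ j * m.choose j) * X ^ j := by
    simp only [neg_pow (X : R[X]), one_pow, mul_one, map_mul, map_pow, map_neg, map_one,
      map_natCast]
    ring
  rw [hterm, umbralEval_C_mul_X_pow]

theorem sum_alternating_choose_mul_sum_alternating_choose (y : ℕ → R) (n : ℕ) :
    ∑ m ∈ range (n + 1), (-1) ^ m * n.choose m *
      ∑ j ∈ range (m + 1), (-1) ^ j * m.choose j * y j = y n := by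
  have hX :
      ∑ m ∈ range (n + 1), ((-1) ^ m * n.choose m : R) • (1 - X : R[X]) ^ m = X ^ n := by
    conv_rhs => rw [← sub_add_cancel X 1, add_pow]
    refine sum_congr rfl fun m _ => ?_
    have hsign : (X - 1 : R[X]) ^ m = (-1) ^ m * (1 - X) ^ m := by
      rw [← mul_pow, neg_one_mul, neg_sub]
    rw [hsign, smul_eq_C_mul]
    simp only [one_pow, mul_one, map_mul, map_pow, map_neg, map_one, map_natCast]
    ring
  calc _ = ∑ m ∈ range (n + 1), umbralEval y (((-1) ^ m * n.choose m : R) • (1 - X) ^ m) := by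
        simp only [map_smul, smul_eq_mul, umbralEval_one_sub_X_pow]
    _ = y n := by rw [← map_sum, hX, umbralEval_X_pow]

end BinomialInversion

theorem eq_of_forall_sum_mul_pow_eq {R : Type*} [CommRing R] [IsDomain R] [Infinite R] {N : ℕ}
    {f g : ℕ → R} (h : ∀ x, ∑ k ∈ range N, f k * x ^ k = ∑ k ∈ range N, g k * x ^ k)
    {m : ℕ} (hm : m < N) : f m = g m := by
  have hpoly : ∑ k ∈ range N, C (f k) * X ^ k = ∑ k ∈ range N, C (g k) * X ^ k :=
    Polynomial.funext fun x => by simpa [eval_finsetSum] using h x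
  simpa [finsetSum_coeff, coeff_C_mul, coeff_X_pow, hm] using congrArg (coeff · m) hpoly

lemma poch_neg_natCast (n j : ℕ) : poch (-(n : ℂ)) j = (-1) ^ j * n.descFactorial j := by
  have hneg : ∀ i : ℕ, -(n : ℂ) + i = -((n : ℂ) - i) := fun i => by ring
  simp only [poch, hneg, prod_neg, card_range, ← descPochhammer_eval_eq_prod_range,
    descPochhammer_eval_eq_descFactorial]

lemma poch_neg_natCast_div_factorial (n j : ℕ) :
    poch (-(n : ℂ)) j / j.factorial = (-1) ^ j * n.choose j := by
  rw [poch_neg_natCast, Nat.descFactorial_eq_factorial_mul_choose, Nat.cast_mul, mul_left_comm,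
    mul_div_cancel_left₀ _ (Nat.cast_ne_zero.2 j.factorial_ne_zero)]

noncomputable def lagWeight (r s : ℕ) (α : Fin r → ℂ) (β : Fin s → ℂ) (n : ℕ) : ℂ :=
  (∏ i, poch (β i) n) / (∏ i, poch (α i) n)

section genLag

variable {r s : ℕ} {α : Fin r → ℂ} {β : Fin s → ℂ}

lemma lagWeight_ne_zero (hα : ∀ i n, poch (α i) n ≠ 0) (hβ : ∀ i n, poch (β i) n ≠ 0)
    (n : ℕ) :
    lagWeight r s α β n ≠ 0 :=
  div_ne_zero (prod_ne_zero_iff.2 fun i _ => hβ i n) (prod_ne_zero_iff.2 fun i _ => hα i n)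

lemma genLag_eq_lagWeight_mul_sum (n : ℕ) (x : ℂ) :
    genLag r s α β n x = lagWeight r s α β n *
      ∑ j ∈ range (n + 1), (-1) ^ j * n.choose j * (x ^ j / lagWeight r s α β j) := by
  unfold genLag lagWeight
  congr 1
  refine sum_congr rfl fun j _ => ?_
  rw [← poch_neg_natCast_div_factorial, div_div_eq_mul_div]
  ring

lemma genLag_eq_sum_mul_pow (n : ℕ) (x : ℂ) :
    genLag r s α β n x = ∑ j ∈ range (n + 1),
      lagWeight r s α β n / lagWeight r s α β j * ((-1) ^ j * n.choose j) * x ^ j := by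
  rw [genLag_eq_lagWeight_mul_sum, mul_sum]
  exact sum_congr rfl fun j _ => by ring

end genLag

/-- the generalized Laguerre-type polynomials are self-inverse:
if `L̃_n(x) = ∑_{m=0}^n c_{n,m} x^m` then `x^n = ∑_{m=0}^n c_{n,m} L̃_m(x)`. -/
theorem genLag_self_inverse (r s : ℕ) (α : Fin r → ℂ) (β : Fin s → ℂ)
    (hα : ∀ i n, poch (α i) n ≠ 0) (hβ : ∀ i n, poch (β i) n ≠ 0)
    (c : ℕ → ℕ → ℂ)
    (hc : ∀ n x, genLag r s α β n x = ∑ m ∈ Finset.range (n + 1), c n m * x ^ m) :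
    ∀ n x, x ^ n = ∑ m ∈ Finset.range (n + 1), c n m * genLag r s α β m x := by
  intro n x
  set w := lagWeight r s α β with hw_def
  have hw : ∀ m, w m ≠ 0 := lagWeight_ne_zero hα hβ
  have hcoeff : ∀ m ∈ range (n + 1), c n m = w n / w m * ((-1) ^ m * n.choose m) :=
    fun m hm => eq_of_forall_sum_mul_pow_eq
      (fun x => (hc n x).symm.trans (genLag_eq_sum_mul_pow n x)) (mem_range.1 hm)
  symm
  calc ∑ m ∈ range (n + 1), c n m * genLag r s α β m x
      = w n * ∑ m ∈ range (n + 1), (-1) ^ m * n.choose m *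
          ∑ j ∈ range (m + 1), (-1) ^ j * m.choose j * (x ^ j / w j) := by
        rw [mul_sum]
        refine sum_congr rfl fun m hm => ?_
        rw [hcoeff m hm, genLag_eq_lagWeight_mul_sum, ← hw_def]
        field_simp [hw m]
    _ = x ^ n := by
        rw [sum_alternating_choose_mul_sum_alternating_choose, mul_div_cancel₀ _ (hw n)]
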